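/- Let K be a field with a surjective valuation v : K → ℤ ∪ {∞} and let f = a₀ + a₁z + ⋯ + aₙzⁿ ∈ K[z] of degree n with v(aₙ) = 0 and v(a₀)/n ≤ v(aᵢ)/(n−i) for all 1 ≤ i ≤ n−1. Then every irreducible factor of f in K[z] has degree at least n / gcd(v(a₀), n). -/

import Mathlib

/-!
Weight the `i`-th coefficient of a polynomial by `n • v aᵢ + i • v a₀`, i.e. measure the points
of its Newton polygon against lines of slope `-v(a₀)/n`. The minimal weight is additive on
products, and so are the least and the greatest indices at which it is attained, since at such
an index of a product one term of the coefficient has strictly smaller valuation than the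
others. The hypotheses say that `f` attains its minimal weight exactly at the ends `0` and `n`,
hence so does every factor `g`. For `k = deg g` this reads `n • v g₀ = n • v g_k + k • v a₀`,
so `n ∣ k • v a₀`, and `n / gcd (v a₀) n` divides `k`.
-/

open Polynomial Finset

namespace WithTop

section Group

variable {Γ : Type*} [AddCommGroup Γ] [LinearOrder Γ] [IsOrderedAddMonoid Γ]

lemma coe_le_add_coe_iff {a g : Γ} {x : WithTop Γ} :
    (a : WithTop Γ) ≤ x + g ↔ ((a - g : Γ) : WithTop Γ) ≤ x := by
  cases x with
  | top => simp
  | coe b => rw [← coe_add, coe_le_coe, coe_le_coe, sub_le_iff_le_add]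

lemma coe_lt_add_coe_iff {a g : Γ} {x : WithTop Γ} :
    (a : WithTop Γ) < x + g ↔ ((a - g : Γ) : WithTop Γ) < x := by
  cases x with
  | top => simp only [top_add, coe_lt_top]
  | coe b => rw [← coe_add, coe_lt_coe, coe_lt_coe, sub_lt_iff_lt_add]

end Group

lemma nsmul_top_of_ne_zero {Γ : Type*} [AddMonoid Γ] {n : ℕ} (hn : n ≠ 0) :
    n • (⊤ : WithTop Γ) = ⊤ := by
  obtain ⟨k, rfl⟩ := Nat.exists_eq_succ_of_ne_zero hn
  rw [succ_nsmul, add_top]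

lemma natCast_mul_eq_nsmul {n : ℕ} (hn : n ≠ 0) (x : WithTop ℤ) :
    (n : WithTop ℤ) * x = n • x := by
  cases x with
  | top => rw [nsmul_top_of_ne_zero hn, mul_top (by exact_mod_cast hn)]
  | coe a => rw [← coe_nsmul, ← coe_natCast, ← coe_mul, nsmul_eq_mul]

end WithTop

namespace AddValuation

variable {R Γ : Type*} [Ring R] [AddCancelCommMonoid Γ] [LinearOrder Γ] [IsOrderedAddMonoid Γ]

def nsmul (v : AddValuation R (WithTop Γ)) (n : ℕ) [NeZero n] : AddValuation R (WithTop Γ) :=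
  v.map (nsmulAddMonoidHom n) (WithTop.nsmul_top_of_ne_zero (NeZero.ne n))
    fun _ _ h => nsmul_le_nsmul_right h n

@[simp] lemma nsmul_apply (v : AddValuation R (WithTop Γ)) (n : ℕ) [NeZero n] (x : R) :
    v.nsmul n x = n • v x := rfl

end AddValuation

namespace Polynomial

variable {K Γ : Type*} [Field K] [AddCommGroup Γ] [LinearOrder Γ] [IsOrderedAddMonoid Γ]
  (v : AddValuation K (WithTop Γ)) (c : Γ)

/-- The intercept at `0` of the line of slope `-c` through the point `(i, v pᵢ)` of the Newton
polygon of `p`. -/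
def slopeWeight (p : K[X]) (i : ℕ) : WithTop Γ := v (p.coeff i) + (i • c : Γ)

structure IsLeastMinIndex (p : K[X]) (W : Γ) (s : ℕ) : Prop where
  le : ∀ i, (W : WithTop Γ) ≤ slopeWeight v c p i
  eq : slopeWeight v c p s = W
  lt : ∀ i < s, (W : WithTop Γ) < slopeWeight v c p i

structure IsGreatestMinIndex (p : K[X]) (W : Γ) (r : ℕ) : Prop where
  le : ∀ i, (W : WithTop Γ) ≤ slopeWeight v c p i
  eq : slopeWeight v c p r = W
  lt : ∀ i, r < i → (W : WithTop Γ) < slopeWeight v c p i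

/-- The Newton polygon of `p` is a single segment of slope `-c`. -/
def IsPure (p : K[X]) : Prop :=
  ∃ W : Γ, IsLeastMinIndex v c p W 0 ∧ IsGreatestMinIndex v c p W p.natDegree

variable {v c} {p q : K[X]} {Wp Wq : Γ} {s t : ℕ}

lemma slopeWeight_eq_top_of_natDegree_lt {i : ℕ} (hi : p.natDegree < i) :
    slopeWeight v c p i = ⊤ := by
  rw [slopeWeight, coeff_eq_zero_of_natDegree_lt hi, AddValuation.map_zero, WithTop.top_add]

lemma slopeWeight_ne_top {i : ℕ} (hi : p.coeff i ≠ 0) : slopeWeight v c p i ≠ ⊤ :=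
  WithTop.add_ne_top.mpr ⟨v.ne_top_iff.mpr hi, WithTop.coe_ne_top⟩

lemma slopeWeight_mul_coeff (k : ℕ) :
    slopeWeight v c (p * q) k =
      v (∑ x ∈ antidiagonal k, p.coeff x.1 * q.coeff x.2) + (k • c : Γ) := by
  rw [slopeWeight, coeff_mul]

lemma slopeWeight_add_slopeWeight {k : ℕ} {x : ℕ × ℕ} (hx : x ∈ antidiagonal k) :
    slopeWeight v c p x.1 + slopeWeight v c q x.2 =
      v (p.coeff x.1 * q.coeff x.2) + (k • c : Γ) := by
  rw [← mem_antidiagonal.mp hx, slopeWeight, slopeWeight, v.map_mul, add_nsmul,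
    WithTop.coe_add]
  abel


lemma le_slopeWeight_mul (hp : ∀ i, (Wp : WithTop Γ) ≤ slopeWeight v c p i)
    (hq : ∀ j, (Wq : WithTop Γ) ≤ slopeWeight v c q j) (k : ℕ) :
    ((Wp + Wq : Γ) : WithTop Γ) ≤ slopeWeight v c (p * q) k := by
  rw [slopeWeight_mul_coeff, WithTop.coe_le_add_coe_iff]
  refine v.map_le_sum fun x hx => ?_
  rw [← WithTop.coe_le_add_coe_iff, ← slopeWeight_add_slopeWeight hx, WithTop.coe_add]
  exact add_le_add (hp _) (hq _)

lemma coe_add_lt_slopeWeight_add {i j : ℕ} (hp : ∀ i, (Wp : WithTop Γ) ≤ slopeWeight v c p i)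
    (hq : ∀ j, (Wq : WithTop Γ) ≤ slopeWeight v c q j)
    (h : (Wp : WithTop Γ) < slopeWeight v c p i ∨ (Wq : WithTop Γ) < slopeWeight v c q j) :
    ((Wp + Wq : Γ) : WithTop Γ) < slopeWeight v c p i + slopeWeight v c q j := by
  rw [WithTop.coe_add]
  rcases h with h | h
  · exact WithTop.add_lt_add_of_lt_of_le WithTop.coe_ne_top h (hq j)
  · exact WithTop.add_lt_add_of_le_of_lt WithTop.coe_ne_top (hp i) h

lemma lt_slopeWeight_mul (hp : ∀ i, (Wp : WithTop Γ) ≤ slopeWeight v c p i)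
    (hq : ∀ j, (Wq : WithTop Γ) ≤ slopeWeight v c q j) {k : ℕ}
    (h : ∀ x ∈ antidiagonal k,
      (Wp : WithTop Γ) < slopeWeight v c p x.1 ∨ (Wq : WithTop Γ) < slopeWeight v c q x.2) :
    ((Wp + Wq : Γ) : WithTop Γ) < slopeWeight v c (p * q) k := by
  rw [slopeWeight_mul_coeff, WithTop.coe_lt_add_coe_iff]
  refine v.map_lt_sum WithTop.coe_ne_top fun x hx => ?_
  rw [← WithTop.coe_lt_add_coe_iff, ← slopeWeight_add_slopeWeight hx]
  exact coe_add_lt_slopeWeight_add hp hq (h x hx)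

lemma slopeWeight_mul_add (hp : ∀ i, (Wp : WithTop Γ) ≤ slopeWeight v c p i)
    (hq : ∀ j, (Wq : WithTop Γ) ≤ slopeWeight v c q j)
    (hs : slopeWeight v c p s = Wp) (ht : slopeWeight v c q t = Wq)
    (h : ∀ x ∈ antidiagonal (s + t), x ≠ (s, t) →
      (Wp : WithTop Γ) < slopeWeight v c p x.1 ∨ (Wq : WithTop Γ) < slopeWeight v c q x.2) :
    slopeWeight v c (p * q) (s + t) = ((Wp + Wq : Γ) : WithTop Γ) := by
  have hst : (s, t) ∈ antidiagonal (s + t) := mem_antidiagonal.mpr rfl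
  have hmain : v (p.coeff s * q.coeff t) + ((s + t) • c : Γ) = ((Wp + Wq : Γ) : WithTop Γ) := by
    rw [← slopeWeight_add_slopeWeight hst, hs, ht, WithTop.coe_add]
  have hrest : ((Wp + Wq : Γ) : WithTop Γ) <
      v (∑ x ∈ (antidiagonal (s + t)).erase (s, t), p.coeff x.1 * q.coeff x.2) +
        ((s + t) • c : Γ) := by
    rw [WithTop.coe_lt_add_coe_iff]
    refine v.map_lt_sum WithTop.coe_ne_top fun x hx => ?_
    obtain ⟨hne, hx⟩ := mem_erase.mp hx
    rw [← WithTop.coe_lt_add_coe_iff, ← slopeWeight_add_slopeWeight hx]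
    exact coe_add_lt_slopeWeight_add hp hq (h x hx hne)
  rw [slopeWeight_mul_coeff, ← add_sum_erase _ _ hst, v.map_add_eq_of_lt_left, hmain]
  rw [← WithTop.add_lt_add_iff_right WithTop.coe_ne_top, hmain]
  exact hrest

lemma IsLeastMinIndex.mul (hp : IsLeastMinIndex v c p Wp s) (hq : IsLeastMinIndex v c q Wq t) :
    IsLeastMinIndex v c (p * q) (Wp + Wq) (s + t) := by
  have hlt : ∀ i j, i < s ∨ j < t →
      (Wp : WithTop Γ) < slopeWeight v c p i ∨ (Wq : WithTop Γ) < slopeWeight v c q j := by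
    rintro i j (hi | hj)
    exacts [Or.inl (hp.lt i hi), Or.inr (hq.lt j hj)]
  refine ⟨le_slopeWeight_mul hp.le hq.le, slopeWeight_mul_add hp.le hq.le hp.eq hq.eq ?_,
    fun k hk => lt_slopeWeight_mul hp.le hq.le ?_⟩
  · rintro ⟨i, j⟩ hij hne
    rw [HasAntidiagonal.mem_antidiagonal] at hij
    refine hlt i j ?_
    by_contra! h
    exact hne (Prod.ext (by dsimp only; omega) (by dsimp only; omega))
  · rintro ⟨i, j⟩ hij
    rw [HasAntidiagonal.mem_antidiagonal] at hij
    exact hlt i j (by omega)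

lemma IsGreatestMinIndex.mul (hp : IsGreatestMinIndex v c p Wp s)
    (hq : IsGreatestMinIndex v c q Wq t) : IsGreatestMinIndex v c (p * q) (Wp + Wq) (s + t) := by
  have hlt : ∀ i j, s < i ∨ t < j →
      (Wp : WithTop Γ) < slopeWeight v c p i ∨ (Wq : WithTop Γ) < slopeWeight v c q j := by
    rintro i j (hi | hj)
    exacts [Or.inl (hp.lt i hi), Or.inr (hq.lt j hj)]
  refine ⟨le_slopeWeight_mul hp.le hq.le, slopeWeight_mul_add hp.le hq.le hp.eq hq.eq ?_,
    fun k hk => lt_slopeWeight_mul hp.le hq.le ?_⟩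
  · rintro ⟨i, j⟩ hij hne
    rw [HasAntidiagonal.mem_antidiagonal] at hij
    refine hlt i j ?_
    by_contra! h
    exact hne (Prod.ext (by dsimp only; omega) (by dsimp only; omega))
  · rintro ⟨i, j⟩ hij
    rw [HasAntidiagonal.mem_antidiagonal] at hij
    exact hlt i j (by omega)

lemma IsLeastMinIndex.index_eq {W W' : Γ} {s' : ℕ} (h : IsLeastMinIndex v c p W s)
    (h' : IsLeastMinIndex v c p W' s') : s = s' := by
  have hW : (W : WithTop Γ) = W' := le_antisymm (h'.eq ▸ h.le s') (h.eq ▸ h'.le s)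
  by_contra hne
  rcases Nat.lt_or_gt_of_ne hne with hlt | hlt
  · exact (h'.lt s hlt).ne (hW ▸ h.eq).symm
  · exact (h.lt s' hlt).ne (hW ▸ h'.eq).symm

lemma IsGreatestMinIndex.index_eq {W W' : Γ} {s' : ℕ} (h : IsGreatestMinIndex v c p W s)
    (h' : IsGreatestMinIndex v c p W' s') : s = s' := by
  have hW : (W : WithTop Γ) = W' := le_antisymm (h'.eq ▸ h.le s') (h.eq ▸ h'.le s)
  by_contra hne
  rcases Nat.lt_or_gt_of_ne hne with hlt | hlt
  · exact (h.lt s' hlt).ne (hW ▸ h'.eq).symm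
  · exact (h'.lt s hlt).ne (hW ▸ h.eq).symm

lemma exists_isLeastMinIndex_isGreatestMinIndex (hp : p ≠ 0) :
    ∃ (W : Γ) (s r : ℕ), IsLeastMinIndex v c p W s ∧ IsGreatestMinIndex v c p W r := by
  classical
  obtain ⟨i₀, hi₀, hmin⟩ :=
    p.support.exists_min_image (slopeWeight v c p) (support_nonempty.mpr hp)
  obtain ⟨W, hW⟩ := WithTop.ne_top_iff_exists.mp
    (slopeWeight_ne_top (v := v) (c := c) (mem_support_iff.mp hi₀))
  have hle : ∀ i, (W : WithTop Γ) ≤ slopeWeight v c p i := fun i => by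
    by_cases hi : i ∈ p.support
    · exact hW ▸ hmin i hi
    · rw [slopeWeight, notMem_support_iff.mp hi, v.map_zero, WithTop.top_add]
      exact le_top
  have hex : ∃ i, slopeWeight v c p i = W := ⟨i₀, hW.symm⟩
  have hi₀deg : i₀ ≤ p.natDegree := le_natDegree_of_mem_supp i₀ hi₀
  refine ⟨W, Nat.find hex, Nat.findGreatest (slopeWeight v c p · = W) p.natDegree,
    ⟨hle, Nat.find_spec hex, fun i hi => (hle i).lt_of_ne' (Nat.find_min hex hi)⟩,
    ⟨hle, Nat.findGreatest_spec (P := (slopeWeight v c p · = W)) hi₀deg hW.symm,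
      fun i hi => (hle i).lt_of_ne' ?_⟩⟩
  rcases le_or_gt i p.natDegree with hid | hid
  · exact Nat.findGreatest_is_greatest hi hid
  · rw [slopeWeight_eq_top_of_natDegree_lt hid]
    exact WithTop.top_ne_coe

lemma IsGreatestMinIndex.le_natDegree {W : Γ} {r : ℕ} (h : IsGreatestMinIndex v c p W r) :
    r ≤ p.natDegree := by
  by_contra! hr
  exact WithTop.top_ne_coe ((slopeWeight_eq_top_of_natDegree_lt hr).symm.trans h.eq)

lemma IsPure.of_forall_le {W : Γ} (h : ∀ i, (W : WithTop Γ) ≤ slopeWeight v c p i)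
    (h₀ : slopeWeight v c p 0 = W) (hd : slopeWeight v c p p.natDegree = W) : IsPure v c p :=
  ⟨W, ⟨h, h₀, fun _ hi => absurd hi (Nat.not_lt_zero _)⟩,
    ⟨h, hd, fun _ hi =>
      (slopeWeight_eq_top_of_natDegree_lt (v := v) (c := c) hi).symm ▸ WithTop.coe_lt_top W⟩⟩

lemma IsPure.of_dvd (hp : IsPure v c p) (hp0 : p ≠ 0) (hqp : q ∣ p) : IsPure v c q := by
  obtain ⟨W, hleast, hgreatest⟩ := hp
  obtain ⟨r, rfl⟩ := hqp
  obtain ⟨hq0, hr0⟩ := mul_ne_zero_iff.mp hp0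
  obtain ⟨Wq, sq, rq, hsq, hrq⟩ := exists_isLeastMinIndex_isGreatestMinIndex (v := v) (c := c) hq0
  obtain ⟨Wr, sr, rr, hsr, hrr⟩ := exists_isLeastMinIndex_isGreatestMinIndex (v := v) (c := c) hr0
  have hs : sq + sr = 0 := (hsq.mul hsr).index_eq hleast
  have hr : rq + rr = q.natDegree + r.natDegree :=
    natDegree_mul hq0 hr0 ▸ (hrq.mul hrr).index_eq hgreatest
  have hrq_le := hrq.le_natDegree
  have hrr_le := hrr.le_natDegree
  exact ⟨Wq, (show sq = 0 by omega) ▸ hsq, (show rq = q.natDegree by omega) ▸ hrq⟩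

lemma IsPure.slopeWeight_zero_eq_slopeWeight_natDegree (hp : IsPure v c p) :
    slopeWeight v c p 0 = slopeWeight v c p p.natDegree := by
  obtain ⟨W, hleast, hgreatest⟩ := hp
  rw [hleast.eq, hgreatest.eq]

end Polynomial

lemma Int.div_gcd_dvd_of_dvd_mul {n k : ℕ} {m : ℤ} (hn : 0 < n) (h : (n : ℤ) ∣ k * m) :
    n / Int.gcd m n ∣ k := by
  have hmod : (k : ℤ) * m ≡ 0 * m [ZMOD n] := by
    rw [zero_mul]
    exact Int.modEq_zero_iff_dvd.mpr h
  have hk := Int.ModEq.cancel_right_div_gcd (by exact_mod_cast hn) hmod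
  rw [Int.modEq_zero_iff_dvd, Int.gcd_comm] at hk
  exact_mod_cast hk

namespace Polynomial

variable {K : Type*} [Field K] {v : AddValuation K (WithTop ℤ)} {n : ℕ} [NeZero n] {m : ℤ}
  {p : K[X]}

/-- Scaling `v` by `n` makes the slope `-m / n` integral. -/
lemma isPure_nsmul_of_le (hdeg : p.natDegree = n) (hvn : v (p.coeff n) = 0)
    (hv0 : v (p.coeff 0) = m)
    (hle : ∀ i, 1 ≤ i → i < n →
      (((n - i) * m : ℤ) : WithTop ℤ) ≤ (n : WithTop ℤ) * v (p.coeff i)) :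
    IsPure (v.nsmul n) m p := by
  have hn := NeZero.ne n
  have hw₀ : slopeWeight (v.nsmul n) m p 0 = (n • m : ℤ) := by
    rw [slopeWeight, AddValuation.nsmul_apply, hv0, zero_nsmul, WithTop.coe_zero, add_zero,
      WithTop.coe_nsmul]
  have hwn : slopeWeight (v.nsmul n) m p n = (n • m : ℤ) := by
    rw [slopeWeight, AddValuation.nsmul_apply, hvn, nsmul_zero, zero_add]
  refine IsPure.of_forall_le (fun i => ?_) hw₀ (hdeg ▸ hwn)
  rcases Nat.eq_zero_or_pos i with rfl | hi
  · exact hw₀.ge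
  rcases lt_trichotomy i n with hin | rfl | hin
  · have hi' := hle i hi hin
    rw [WithTop.natCast_mul_eq_nsmul hn] at hi'
    calc ((n • m : ℤ) : WithTop ℤ) = (((n - i) * m : ℤ) : WithTop ℤ) + (i • m : ℤ) := by
          rw [← WithTop.coe_add, nsmul_eq_mul, nsmul_eq_mul]; congr 1; ring
      _ ≤ slopeWeight (v.nsmul n) m p i := add_le_add hi' le_rfl
  · exact hwn.ge
  · rw [slopeWeight_eq_top_of_natDegree_lt (hdeg ▸ hin)]
    exact le_top

lemma IsPure.dvd_natDegree_mul (hp : IsPure (v.nsmul n) m p) (hp0 : p ≠ 0) :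
    (n : ℤ) ∣ p.natDegree * m := by
  have h := hp.slopeWeight_zero_eq_slopeWeight_natDegree
  obtain ⟨b, hb⟩ := WithTop.ne_top_iff_exists.mp (v.ne_top_iff.mpr (leadingCoeff_ne_zero.mpr hp0))
  rw [slopeWeight, slopeWeight, AddValuation.nsmul_apply, AddValuation.nsmul_apply,
    ← leadingCoeff, ← hb] at h
  rw [← WithTop.coe_nsmul, ← WithTop.coe_add] at h
  cases ha : v (p.coeff 0) with
  | top =>
    rw [ha, WithTop.nsmul_top_of_ne_zero (NeZero.ne n), WithTop.top_add] at h
    exact absurd h WithTop.top_ne_coe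
  | coe a =>
    rw [ha, ← WithTop.coe_nsmul, ← WithTop.coe_add, WithTop.coe_inj] at h
    exact ⟨a - b, by linear_combination -h⟩

end Polynomial

theorem stmt_8_general {K : Type*} [Field K] (v : K → WithTop ℤ)
    (hv0 : ∀ x : K, v x = ⊤ ↔ x = 0)
    (hvmul : ∀ x y : K, v (x * y) = v x + v y)
    (hvadd : ∀ x y : K, min (v x) (v y) ≤ v (x + y))
    (f : Polynomial K) (n : ℕ) (m₀ : ℤ)
    (hdeg : f.natDegree = n)
    (hvn : v (f.coeff n) = 0)
    (hv0' : v (f.coeff 0) = (m₀ : WithTop ℤ))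
    (hii : ∀ i : ℕ, 1 ≤ i → i < n →
      ((((n : ℤ) - i) * m₀ : ℤ) : WithTop ℤ) ≤ ((n : ℕ) : WithTop ℤ) * v (f.coeff i)) :
    ∀ g : Polynomial K, Irreducible g → g ∣ f → n / Int.gcd m₀ (n : ℤ) ≤ g.natDegree := by
  intro g hg hgf
  rcases Nat.eq_zero_or_pos n with rfl | hn
  · simp
  have : NeZero n := ⟨hn.ne'⟩
  have hv1 : v 1 = 0 := by
    obtain ⟨a, ha⟩ := WithTop.ne_top_iff_exists.mp (mt (hv0 1).mp one_ne_zero)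
    have h := hvmul 1 1
    rw [mul_one, ← ha, ← WithTop.coe_add, WithTop.coe_inj] at h
    rw [← ha, WithTop.coe_eq_zero]
    omega
  let w := (AddValuation.of v ((hv0 0).mpr rfl) hv1 hvadd hvmul).nsmul n
  have hf0 : f ≠ 0 := fun hf => by simp [hf, (hv0 0).mpr rfl] at hvn
  have hf : IsPure w m₀ f := isPure_nsmul_of_le hdeg hvn hv0' hii
  have hdvd := (hf.of_dvd hf0 hgf).dvd_natDegree_mul hg.ne_zero
  exact Nat.le_of_dvd hg.natDegree_pos (Int.div_gcd_dvd_of_dvd_mul hn hdvd)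

/-- Single-segment Newton polygon bound (j = n case of Theorem 2): every irreducible
factor of f has degree at least n / gcd(v(a₀), n). -/
theorem stmt_8 {K : Type*} [Field K] (v : K → WithTop ℤ)
    (hv0 : ∀ x : K, v x = ⊤ ↔ x = 0)
    (hvmul : ∀ x y : K, v (x * y) = v x + v y)
    (hvadd : ∀ x y : K, min (v x) (v y) ≤ v (x + y))
    (hvsurj : ∀ g : ℤ, ∃ x : K, v x = (g : WithTop ℤ))
    (f : Polynomial K) (n : ℕ) (m₀ : ℤ)
    (hdeg : f.natDegree = n)
    (hvn : v (f.coeff n) = 0)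
    (hv0' : v (f.coeff 0) = (m₀ : WithTop ℤ))
    (hii : ∀ i : ℕ, 1 ≤ i → i < n →
      ((((n : ℤ) - i) * m₀ : ℤ) : WithTop ℤ) ≤ ((n : ℕ) : WithTop ℤ) * v (f.coeff i)) :
    ∀ g : Polynomial K, Irreducible g → g ∣ f → n / Int.gcd m₀ (n : ℤ) ≤ g.natDegree :=
  stmt_8_general v hv0 hvmul hvadd f n m₀ hdeg hvn hv0' hii
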